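/- arXiv:2404.04172 — 3 statements merged into one kernel-verified Lean document; each statement's English description precedes it below -/
import Mathlib

section
/- Let α ≥ 1 and let d be a metric on a countable set Λ taking nonnegative real values, and suppose u := 2^α · sup_{i} ∑_{j ∈ Λ} (1 + d(i,j))^(-α) is finite. If J(i,j) := g / (1 + d(i,j))^α for a constant g > 0, then for all i, k ∈ Λ, ∑_{j ∈ Λ} J(i,j) · J(j,k) ≤ g² u / (1 + d(i,k))^α. -/
private lemma real_rpow_add_le {x y p : ℝ} (hx : 0 ≤ x) (hy : 0 ≤ y) (hp : 1 ≤ p) :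
    (x + y) ^ p ≤ (2 : ℝ) ^ (p - 1) * (x ^ p + y ^ p) := by
  have h := NNReal.coe_le_coe.2 (NNReal.rpow_add_le_mul_rpow_add_rpow x.toNNReal y.toNNReal hp)
  simpa [NNReal.coe_rpow, Real.coe_toNNReal _ hx, Real.coe_toNNReal _ hy] using h

/-- Convolution bound for power-law decaying interactions (Lemma `productlemma`):
on a countable metric space `Λ`, with `J i j = g/(1+d(i,j))^α`, `α ≥ 1`, and
`u = 2^α · sup_i ∑_j (1+d(i,j))^(-α)` finite, one has
`∑_j J(i,j)·J(j,k) ≤ g²·u/(1+d(i,k))^α`. -/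
theorem stmt_1 {Λ : Type*} [Countable Λ] [MetricSpace Λ]
    (α g u : ℝ) (hα : 1 ≤ α) (hg : 0 < g)
    (hsum : ∀ i : Λ, Summable fun j : Λ => (1 + dist i j) ^ (-α))
    (hu : ∀ i : Λ, 2 ^ α * ∑' j : Λ, (1 + dist i j) ^ (-α) ≤ u)
    (J : Λ → Λ → ℝ) (hJ : ∀ i j : Λ, J i j = g / (1 + dist i j) ^ α)
    (i k : Λ) (hJsum : Summable fun j : Λ => J i j * J j k) :
    ∑' j : Λ, J i j * J j k ≤ g ^ 2 * u / (1 + dist i k) ^ α := by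
  set c : ℝ := 1 + dist i k with hc
  have hc1 : (1 : ℝ) ≤ c := by simp [hc, dist_nonneg]
  have hc0 : (0 : ℝ) < c := lt_of_lt_of_le one_pos hc1
  have hC0 : (0 : ℝ) < c ^ α := Real.rpow_pos_of_pos hc0 α
  have hK0 : (0 : ℝ) < (2 : ℝ) ^ (α - 1) := Real.rpow_pos_of_pos two_pos _
  -- summability of the majorant
  have hS1 := hsum i
  have hS2 : Summable fun j : Λ => (1 + dist j k) ^ (-α) := by
    simpa [dist_comm] using hsum k
  have hmaj : Summable fun j : Λ =>
      g ^ 2 * (2 : ℝ) ^ (α - 1) / c ^ α * ((1 + dist i j) ^ (-α) + (1 + dist j k) ^ (-α)) :=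
    (hS1.add hS2).mul_left _
  -- pointwise bound
  have hpt : ∀ j : Λ, J i j * J j k ≤
      g ^ 2 * (2 : ℝ) ^ (α - 1) / c ^ α * ((1 + dist i j) ^ (-α) + (1 + dist j k) ^ (-α)) := by
    intro j
    set a : ℝ := 1 + dist i j with ha
    set b : ℝ := 1 + dist j k with hb
    have ha0 : (0 : ℝ) < a := by positivity
    have hb0 : (0 : ℝ) < b := by positivity
    have hA0 : (0 : ℝ) < a ^ α := Real.rpow_pos_of_pos ha0 α
    have hB0 : (0 : ℝ) < b ^ α := Real.rpow_pos_of_pos hb0 α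
    have hcab : c ≤ a + b := by
      have := dist_triangle i j k
      simp only [ha, hb, hc]; linarith
    have hCab : c ^ α ≤ (2 : ℝ) ^ (α - 1) * (a ^ α + b ^ α) :=
      le_trans (Real.rpow_le_rpow hc0.le hcab (le_trans zero_le_one hα))
        (real_rpow_add_le ha0.le hb0.le hα)
    rw [hJ, hJ, Real.rpow_neg ha0.le, Real.rpow_neg hb0.le]
    rw [div_mul_div_comm, div_le_iff₀ (by positivity)]
    have key : g * g * (c ^ α) ≤ g ^ 2 * ((2 : ℝ) ^ (α - 1) * (a ^ α + b ^ α)) := by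
      have : g * g = g ^ 2 := by ring
      rw [this]
      exact mul_le_mul_of_nonneg_left hCab (by positivity)
    calc g * g ≤ g ^ 2 * ((2:ℝ) ^ (α - 1) * (a ^ α + b ^ α)) / c ^ α := by
          rw [le_div_iff₀ hC0]; linarith [key]
      _ = g ^ 2 * (2:ℝ) ^ (α - 1) / c ^ α * ((a ^ α)⁻¹ + (b ^ α)⁻¹) * (a ^ α * b ^ α) := by
          field_simp; ring
  have h1 : ∑' j : Λ, J i j * J j k ≤
      ∑' j : Λ, g ^ 2 * (2 : ℝ) ^ (α - 1) / c ^ α *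
        ((1 + dist i j) ^ (-α) + (1 + dist j k) ^ (-α)) :=
    Summable.tsum_le_tsum hpt hJsum hmaj
  have htsum : ∑' j : Λ, g ^ 2 * (2 : ℝ) ^ (α - 1) / c ^ α *
      ((1 + dist i j) ^ (-α) + (1 + dist j k) ^ (-α))
      = g ^ 2 * (2 : ℝ) ^ (α - 1) / c ^ α *
        ((∑' j : Λ, (1 + dist i j) ^ (-α)) + ∑' j : Λ, (1 + dist j k) ^ (-α)) := by
    rw [tsum_mul_left, Summable.tsum_add hS1 hS2]
  -- bound the sums by u / 2^α
  have h2pos : (0 : ℝ) < (2 : ℝ) ^ α := Real.rpow_pos_of_pos two_pos α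
  have hSi : ∑' j : Λ, (1 + dist i j) ^ (-α) ≤ u / (2 : ℝ) ^ α :=
    (le_div_iff₀' h2pos).2 (hu i)
  have hSk : ∑' j : Λ, (1 + dist j k) ^ (-α) ≤ u / (2 : ℝ) ^ α := by
    have : (∑' j : Λ, (1 + dist j k) ^ (-α)) = ∑' j : Λ, (1 + dist k j) ^ (-α) := by
      simp [dist_comm]
    rw [this]
    exact (le_div_iff₀' h2pos).2 (hu k)
  have hu0 : 0 ≤ u := by
    have h0 : (0:ℝ) ≤ ∑' j : Λ, (1 + dist i j) ^ (-α) :=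
      tsum_nonneg fun j => Real.rpow_nonneg (by positivity) _
    nlinarith [hu i]
  have h2 : g ^ 2 * (2 : ℝ) ^ (α - 1) / c ^ α *
      ((∑' j : Λ, (1 + dist i j) ^ (-α)) + ∑' j : Λ, (1 + dist j k) ^ (-α))
      ≤ g ^ 2 * (2 : ℝ) ^ (α - 1) / c ^ α * (2 * (u / (2 : ℝ) ^ α)) := by
    apply mul_le_mul_of_nonneg_left _ (by positivity)
    linarith [hSi, hSk]
  have h3 : g ^ 2 * (2 : ℝ) ^ (α - 1) / c ^ α * (2 * (u / (2 : ℝ) ^ α))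
      = g ^ 2 * u / c ^ α := by
    have h2a : (2 : ℝ) ^ (α - 1) = (2 : ℝ) ^ α / 2 := by
      rw [Real.rpow_sub two_pos, Real.rpow_one]
    rw [h2a]
    field_simp
  calc ∑' j : Λ, J i j * J j k ≤ _ := h1
    _ = _ := htsum
    _ ≤ _ := h2
    _ = g ^ 2 * u / c ^ α := h3
end

section
/- On the lattice Λ = ℤ^D with Manhattan distance, partitioned as A = {i : i₁ ≤ 0} and B = {i : i₁ ≥ 1} restricted to a finite box of side length L, if 2α > D + 1 then the double sum ∑_{i ∈ A} ∑_{j ∈ B} d(i,j)^{-2α} is bounded above by C · L^{D−1} for a constant C depending only on α and D (i.e., proportional to the boundary area |∂A|). -/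
open Finset

/-- Manhattan (ℓ¹) distance on `ℤ^D`. -/
def manhattan {D : ℕ} (i j : Fin D → ℤ) : ℤ := ∑ t, |i t - j t|

noncomputable def Kc (q : ℝ) : ℝ := ∑' n : ℕ, ((n : ℝ) + 1) ^ (-q)

lemma summable_Kc {q : ℝ} (hq : 1 < q) : Summable (fun n : ℕ => ((n : ℝ) + 1) ^ (-q)) := by
  have h : Summable (fun n : ℕ => (n : ℝ) ^ (-q)) :=
    Real.summable_nat_rpow.2 (by linarith)
  have := (summable_nat_add_iff 1).2 h
  simpa using this

lemma Kc_nonneg (q : ℝ) : 0 ≤ Kc q :=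
  tsum_nonneg fun n => Real.rpow_nonneg (by positivity) _

lemma sum_le_Kc {β : ℝ} (hβ : 1 < β) (s : Finset ℤ) (e : ℤ → ℕ) (he : Set.InjOn e s)
    (f : ℤ → ℝ) (hf : ∀ y ∈ s, f y ≤ ((e y : ℝ) + 1) ^ (-β)) : ∑ y ∈ s, f y ≤ Kc β := by
  calc ∑ y ∈ s, f y ≤ ∑ y ∈ s, ((e y : ℝ) + 1) ^ (-β) := Finset.sum_le_sum hf
    _ = ∑ n ∈ s.image e, ((n : ℝ) + 1) ^ (-β) :=
      (Finset.sum_image (f := fun n : ℕ => ((n : ℝ) + 1) ^ (-β)) (fun a ha b hb h => he ha hb h)).symm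
    _ ≤ Kc β := Summable.sum_le_tsum _ (fun n _ => Real.rpow_nonneg (by positivity) _) (summable_Kc hβ)

lemma factor_x {q : ℝ} (hq : 1 < q) (L : ℕ) :
    ∑ x ∈ Finset.Icc (1 - (L : ℤ)) 0, ((1 : ℝ) - (x : ℝ)) ^ (-q) ≤ Kc q := by
  apply sum_le_Kc hq _ (fun x => (-x).toNat)
  · intro a ha b hb h
    simp only [Finset.coe_Icc, Set.mem_Icc] at ha hb
    dsimp only at h
    omega
  · intro y hy
    simp only [Finset.mem_Icc] at hy
    have h1 : (((-y).toNat : ℤ) : ℝ) = ((-y : ℤ) : ℝ) := by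
      exact_mod_cast congrArg (Int.cast (R := ℝ) :) (Int.toNat_of_nonneg (by omega))
    apply le_of_eq
    congr 1
    push_cast at h1 ⊢
    linarith

lemma factor_y {q : ℝ} (hq : 1 < q) (L : ℕ) :
    ∑ y ∈ Finset.Icc (1 : ℤ) (L : ℤ), ((y : ℝ)) ^ (-q) ≤ Kc q := by
  apply sum_le_Kc hq _ (fun y => (y - 1).toNat)
  · intro a ha b hb h
    simp only [Finset.coe_Icc, Set.mem_Icc] at ha hb
    dsimp only at h
    omega
  · intro y hy
    simp only [Finset.mem_Icc] at hy
    have h1 : (((y - 1).toNat : ℤ) : ℝ) = ((y - 1 : ℤ) : ℝ) := by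
      exact_mod_cast congrArg (Int.cast (R := ℝ) :) (Int.toNat_of_nonneg (by omega))
    apply le_of_eq
    congr 1
    push_cast at h1 ⊢
    linarith

lemma factor_t {β : ℝ} (hβ : 1 < β) (L : ℕ) :
    ∑ x ∈ Finset.Icc (1 : ℤ) (L : ℤ), ∑ y ∈ Finset.Icc (1 : ℤ) (L : ℤ),
      ((1 + |x - y| : ℤ) : ℝ) ^ (-β) ≤ (2 * Kc β + 1) * L := by
  have inner : ∀ x : ℤ, ∑ y ∈ Finset.Icc (1 : ℤ) (L : ℤ), ((1 + |x - y| : ℤ) : ℝ) ^ (-β)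
      ≤ 2 * Kc β := by
    intro x
    rw [← Finset.sum_filter_add_sum_filter_not _ (fun y => y ≤ x)]
    have h1 : ∑ y ∈ (Finset.Icc (1 : ℤ) (L : ℤ)).filter (fun y => y ≤ x),
        ((1 + |x - y| : ℤ) : ℝ) ^ (-β) ≤ Kc β := by
      apply sum_le_Kc hβ _ (fun y => (x - y).toNat)
      · intro a ha b hb h
        simp only [Finset.coe_filter, Set.mem_setOf_eq, Finset.mem_Icc] at ha hb
        dsimp only at h
        omega
      · intro y hy
        simp only [Finset.mem_filter, Finset.mem_Icc] at hy
        apply le_of_eq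
        congr 1
        have h2 : (1 + |x - y| : ℤ) = ((x - y).toNat : ℤ) + 1 := by
          rw [abs_of_nonneg (by omega : (0:ℤ) ≤ x - y)]; omega
        rw [h2]; push_cast; ring
    have h2 : ∑ y ∈ (Finset.Icc (1 : ℤ) (L : ℤ)).filter (fun y => ¬ y ≤ x),
        ((1 + |x - y| : ℤ) : ℝ) ^ (-β) ≤ Kc β := by
      apply sum_le_Kc hβ _ (fun y => (y - x).toNat)
      · intro a ha b hb h
        simp only [Finset.coe_filter, Set.mem_setOf_eq, Finset.mem_Icc] at ha hb
        dsimp only at h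
        omega
      · intro y hy
        simp only [Finset.mem_filter, Finset.mem_Icc] at hy
        apply le_of_eq
        congr 1
        have h2 : (1 + |x - y| : ℤ) = ((y - x).toNat : ℤ) + 1 := by
          rw [abs_sub_comm, abs_of_nonneg (by omega : (0:ℤ) ≤ y - x)]; omega
        rw [h2]; push_cast; ring
    linarith
  calc ∑ x ∈ Finset.Icc (1 : ℤ) (L : ℤ), ∑ y ∈ Finset.Icc (1 : ℤ) (L : ℤ),
        ((1 + |x - y| : ℤ) : ℝ) ^ (-β)
      ≤ ∑ _x ∈ Finset.Icc (1 : ℤ) (L : ℤ), 2 * Kc β := Finset.sum_le_sum fun x _ => inner x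
    _ = (Finset.Icc (1 : ℤ) (L : ℤ)).card * (2 * Kc β) := by rw [Finset.sum_const, nsmul_eq_mul]
    _ ≤ (2 * Kc β + 1) * L := by
        rw [Int.card_Icc]
        have hc : ((L : ℤ) + 1 - 1).toNat = L := by omega
        rw [hc]
        have := Kc_nonneg β
        nlinarith [Nat.cast_nonneg (α := ℝ) L]

noncomputable def fct {D : ℕ} (z : Fin D) (q β : ℝ) : Fin D → ℤ → ℤ → ℝ := fun t x y =>
  if t = z then ((1 : ℝ) - (x : ℝ)) ^ (-q) * ((y : ℝ)) ^ (-q)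
  else ((1 + |x - y| : ℤ) : ℝ) ^ (-β)

lemma pointwise {D : ℕ} (z : Fin D) (q β α : ℝ) (hq0 : 0 ≤ q) (hβ0 : 0 ≤ β)
    (hsum : 2 * q + ((D : ℝ) - 1) * β = 2 * α) (hD : 1 ≤ D) (i j : Fin D → ℤ)
    (hiz : i z ≤ 0) (hjz : 1 ≤ j z) :
    (manhattan i j : ℝ) ^ (-(2 * α)) ≤ ∏ t, fct z q β t (i t) (j t) := by
  set M : ℤ := manhattan i j with hM
  have habs : ∀ t, 0 ≤ |i t - j t| := fun t => abs_nonneg _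
  have hMz : |i z - j z| ≤ M := Finset.single_le_sum (fun t _ => habs t) (Finset.mem_univ z)
  have hzval : |i z - j z| = j z - i z := by rw [abs_of_nonpos (by omega)]; ring
  have hMt : ∀ t, t ≠ z → 1 + |i t - j t| ≤ M := by
    intro t ht
    have hpair : ∑ s ∈ ({z, t} : Finset (Fin D)), |i s - j s| = |i z - j z| + |i t - j t| :=
      Finset.sum_pair (Ne.symm ht)
    have hsub : ∑ s ∈ ({z, t} : Finset (Fin D)), |i s - j s| ≤ M :=
      Finset.sum_le_sum_of_subset_of_nonneg (Finset.subset_univ _) (fun s _ _ => habs s)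
    omega
  have hM1 : (1 : ℤ) ≤ M := by omega
  have hMR : (0 : ℝ) < (M : ℝ) := by exact_mod_cast lt_of_lt_of_le one_pos hM1
  have hcard : (Finset.univ.erase z).card = D - 1 := by
    rw [Finset.card_erase_of_mem (Finset.mem_univ z), Finset.card_univ, Fintype.card_fin]
  have hLHS : (M : ℝ) ^ (-(2 * α))
      = ((M : ℝ) ^ (-q) * (M : ℝ) ^ (-q)) * ∏ _t ∈ Finset.univ.erase z, (M : ℝ) ^ (-β) := by
    rw [Finset.prod_const, hcard, ← Real.rpow_natCast ((M : ℝ) ^ (-β)) (D - 1),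
      ← Real.rpow_mul hMR.le, ← Real.rpow_add hMR, ← Real.rpow_add hMR]
    congr 1
    have hc : ((D - 1 : ℕ) : ℝ) = (D : ℝ) - 1 := by
      push_cast [Nat.cast_sub hD]; ring
    rw [hc]; linarith
  rw [hLHS, ← Finset.mul_prod_erase Finset.univ _ (Finset.mem_univ z)]
  have h1 : (M : ℝ) ^ (-q) ≤ ((1 : ℝ) - (i z : ℝ)) ^ (-q) := by
    apply Real.rpow_le_rpow_of_nonpos
    · have h : ((0 : ℤ) : ℝ) < ((1 - i z : ℤ) : ℝ) := by exact_mod_cast (by omega : (0:ℤ) < 1 - i z)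
      push_cast at h ⊢; linarith
    · have h : ((1 - i z : ℤ) : ℝ) ≤ ((M : ℤ) : ℝ) := by exact_mod_cast (by omega : (1 - i z : ℤ) ≤ M)
      push_cast at h ⊢; linarith
    · linarith
  have h2 : (M : ℝ) ^ (-q) ≤ ((j z : ℝ)) ^ (-q) := by
    apply Real.rpow_le_rpow_of_nonpos
    · exact_mod_cast lt_of_lt_of_le one_pos hjz
    · have : (j z : ℤ) ≤ M := by omega
      exact_mod_cast this
    · linarith
  have h3 : ∀ t ∈ Finset.univ.erase z, (M : ℝ) ^ (-β) ≤ ((1 + |i t - j t| : ℤ) : ℝ) ^ (-β) := by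
    intro t ht
    have htz : t ≠ z := (Finset.mem_erase.1 ht).1
    apply Real.rpow_le_rpow_of_nonpos
    · have : (0 : ℤ) < 1 + |i t - j t| := by have := habs t; omega
      exact_mod_cast this
    · exact_mod_cast hMt t htz
    · linarith
  have hfz : fct z q β z (i z) (j z) = ((1 : ℝ) - (i z : ℝ)) ^ (-q) * ((j z : ℝ)) ^ (-q) := by
    simp [fct]
  have hft : ∀ t ∈ Finset.univ.erase z,
      fct z q β t (i t) (j t) = ((1 + |i t - j t| : ℤ) : ℝ) ^ (-β) := by
    intro t ht
    simp [fct, (Finset.mem_erase.1 ht).1]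
  rw [hfz]
  apply mul_le_mul
  · have h : ((0 : ℤ) : ℝ) ≤ ((1 - i z : ℤ) : ℝ) := by exact_mod_cast (by omega : (0:ℤ) ≤ 1 - i z)
    push_cast at h
    exact mul_le_mul h1 h2 (Real.rpow_nonneg hMR.le _) (Real.rpow_nonneg (by linarith) _)
  · apply Finset.prod_le_prod (fun t _ => Real.rpow_nonneg hMR.le _)
    intro t ht
    rw [hft t ht]
    exact h3 t ht
  · exact Finset.prod_nonneg fun t _ => Real.rpow_nonneg hMR.le _
  · have h : ((0 : ℤ) : ℝ) ≤ ((1 - i z : ℤ) : ℝ) := by exact_mod_cast (by omega : (0:ℤ) ≤ 1 - i z)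
    push_cast at h
    have hj : (0:ℝ) ≤ (j z : ℝ) := by exact_mod_cast (by omega : (0:ℤ) ≤ j z)
    exact mul_nonneg (Real.rpow_nonneg (by linarith) _) (Real.rpow_nonneg hj _)


/-- Boundary-area bound for the double power-law sum: on the box of side `L` in
`ℤ^D` split along the first coordinate into `A` (`i₁ ≤ 0`) and `B` (`i₁ ≥ 1`),
if `2α > D + 1` then `∑_{i∈A} ∑_{j∈B} d(i,j)^{-2α} ≤ C · L^{D-1}` for a constant
`C` depending only on `α` and `D`. -/
theorem stmt_7 (D : ℕ) (hD : 1 ≤ D) (α : ℝ) (hα : 2 * α > D + 1) :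
    ∃ C : ℝ, 0 < C ∧ ∀ L : ℕ, 1 ≤ L →
      ∑ i ∈ Finset.Icc (fun t : Fin D => if t = ⟨0, hD⟩ then 1 - (L : ℤ) else 1)
          (fun t : Fin D => if t = ⟨0, hD⟩ then 0 else (L : ℤ)),
        ∑ j ∈ Finset.Icc (fun _ : Fin D => (1 : ℤ)) (fun _ : Fin D => (L : ℤ)),
          (manhattan i j : ℝ) ^ (-(2 * α)) ≤ C * (L : ℝ) ^ (D - 1 : ℤ) := by
  have hD1 : (1 : ℝ) ≤ (D : ℝ) := by exact_mod_cast hD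
  have h0 : (0 : ℝ) < 2 * α - D - 1 := by linarith
  set z : Fin D := ⟨0, hD⟩ with hz
  obtain ⟨ε, hεpos, hεval⟩ : ∃ ε : ℝ, 0 < ε ∧ ε * (2 * D) = 2 * α - D - 1 :=
    ⟨(2 * α - D - 1) / (2 * D), by positivity, by field_simp⟩
  set β : ℝ := 1 + ε with hβdef
  set q : ℝ := α - ((D : ℝ) - 1) * β / 2 with hqdef
  have hDpos : (0 : ℝ) < (D : ℝ) := by linarith
  have hβ : 1 < β := by rw [hβdef]; linarith
  have hq : 1 < q := by
    have e2 : 2 * (q - 1) + ((D : ℝ) - 1) * ε = 2 * α - D - 1 := by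
      rw [hqdef, hβdef]; ring
    have hprod : 0 < (D : ℝ) * ε := mul_pos hDpos hεpos
    nlinarith [e2, hεval, hprod, hεpos]
  have hqsum : 2 * q + ((D : ℝ) - 1) * β = 2 * α := by rw [hqdef]; ring
  have hKq := Kc_nonneg q
  have hKβ := Kc_nonneg β
  refine ⟨(Kc q + 1) ^ 2 * (2 * Kc β + 1) ^ (D - 1),
    mul_pos (pow_pos (by linarith) 2) (pow_pos (by linarith) _), ?_⟩
  intro L hL
  have hzpow : ((L : ℝ)) ^ ((D : ℤ) - 1) = (L : ℝ) ^ (D - 1 : ℕ) := by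
    have : (D : ℤ) - 1 = ((D - 1 : ℕ) : ℤ) := by omega
    rw [this, zpow_natCast]
  rw [hzpow]
  set loA : Fin D → ℤ := fun t : Fin D => if t = z then 1 - (L : ℤ) else 1 with hloA
  set hiA : Fin D → ℤ := fun t : Fin D => if t = z then 0 else (L : ℤ) with hhiA
  -- Step 1: pointwise bound
  have step1 : ∑ i ∈ Finset.Icc loA hiA,
      ∑ j ∈ Finset.Icc (fun _ : Fin D => (1 : ℤ)) (fun _ : Fin D => (L : ℤ)),
        (manhattan i j : ℝ) ^ (-(2 * α))
      ≤ ∑ i ∈ Finset.Icc loA hiA,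
      ∑ j ∈ Finset.Icc (fun _ : Fin D => (1 : ℤ)) (fun _ : Fin D => (L : ℤ)),
        ∏ t, fct z q β t (i t) (j t) := by
    apply Finset.sum_le_sum
    intro i hi
    apply Finset.sum_le_sum
    intro j hj
    rw [Finset.mem_Icc] at hi hj
    have hiz : i z ≤ 0 := by
      have := hi.2 z
      simpa [hhiA] using this
    have hjz : 1 ≤ j z := hj.1 z
    exact pointwise z q β α (by linarith) (by linarith) hqsum hD i j hiz hjz
  -- Step 2: factorization
  have step2 : ∑ i ∈ Finset.Icc loA hiA,
      ∑ j ∈ Finset.Icc (fun _ : Fin D => (1 : ℤ)) (fun _ : Fin D => (L : ℤ)),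
        ∏ t, fct z q β t (i t) (j t)
      = ∏ t, ∑ x ∈ Finset.Icc (loA t) (hiA t), ∑ y ∈ Finset.Icc (1 : ℤ) (L : ℤ),
          fct z q β t x y := by
    rw [Pi.Icc_eq, Pi.Icc_eq]
    calc ∑ i ∈ Fintype.piFinset (fun t => Finset.Icc (loA t) (hiA t)),
          ∑ j ∈ Fintype.piFinset (fun _ : Fin D => Finset.Icc (1 : ℤ) (L : ℤ)),
            ∏ t, fct z q β t (i t) (j t)
        = ∑ i ∈ Fintype.piFinset (fun t => Finset.Icc (loA t) (hiA t)),
            ∏ t, ∑ y ∈ Finset.Icc (1 : ℤ) (L : ℤ), fct z q β t (i t) y := by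
          refine Finset.sum_congr rfl fun i _ => ?_
          exact (Finset.prod_univ_sum _ (fun t y => fct z q β t (i t) y)).symm
      _ = ∏ t, ∑ x ∈ Finset.Icc (loA t) (hiA t), ∑ y ∈ Finset.Icc (1 : ℤ) (L : ℤ),
            fct z q β t x y :=
          (Finset.prod_univ_sum _ (fun t x => ∑ y ∈ Finset.Icc (1 : ℤ) (L : ℤ),
            fct z q β t x y)).symm
  -- Step 3: bound each factor
  have hfac0 : ∑ x ∈ Finset.Icc (loA z) (hiA z), ∑ y ∈ Finset.Icc (1 : ℤ) (L : ℤ),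
      fct z q β z x y ≤ (Kc q + 1) ^ 2 := by
    have hlo : loA z = 1 - (L : ℤ) := by simp [hloA]
    have hhi : hiA z = 0 := by simp [hhiA]
    rw [hlo, hhi]
    have he : ∀ x y : ℤ, fct z q β z x y
        = ((1 : ℝ) - (x : ℝ)) ^ (-q) * ((y : ℝ)) ^ (-q) := by
      intro x y; simp [fct]
    simp only [he]
    rw [← Finset.sum_mul_sum]
    have h1 := factor_x hq L
    have h2 := factor_y hq L
    have hnn1 : (0:ℝ) ≤ ∑ x ∈ Finset.Icc (1 - (L : ℤ)) 0, ((1 : ℝ) - (x : ℝ)) ^ (-q) := by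
      apply Finset.sum_nonneg
      intro x hx
      rw [Finset.mem_Icc] at hx
      have h : ((0 : ℤ) : ℝ) ≤ ((1 - x : ℤ) : ℝ) := by
        exact_mod_cast (by omega : (0:ℤ) ≤ 1 - x)
      push_cast at h
      exact Real.rpow_nonneg (by linarith) _
    calc (∑ x ∈ Finset.Icc (1 - (L : ℤ)) 0, ((1 : ℝ) - (x : ℝ)) ^ (-q))
          * ∑ y ∈ Finset.Icc (1 : ℤ) (L : ℤ), ((y : ℝ)) ^ (-q)
        ≤ Kc q * Kc q := by
          apply mul_le_mul h1 h2 ?_ hKq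
          apply Finset.sum_nonneg
          intro y hy
          rw [Finset.mem_Icc] at hy
          have h : ((0 : ℤ) : ℝ) ≤ ((y : ℤ) : ℝ) := by
            exact_mod_cast (by omega : (0:ℤ) ≤ y)
          exact Real.rpow_nonneg (by exact_mod_cast h) _
      _ ≤ (Kc q + 1) ^ 2 := by nlinarith
  have hfacT : ∀ t : Fin D, t ≠ z → ∑ x ∈ Finset.Icc (loA t) (hiA t),
      ∑ y ∈ Finset.Icc (1 : ℤ) (L : ℤ), fct z q β t x y ≤ (2 * Kc β + 1) * L := by
    intro t ht
    have hlo : loA t = 1 := by simp [hloA, ht]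
    have hhi : hiA t = (L : ℤ) := by simp [hhiA, ht]
    rw [hlo, hhi]
    have he : ∀ x y : ℤ, fct z q β t x y = ((1 + |x - y| : ℤ) : ℝ) ^ (-β) := by
      intro x y; simp [fct, ht]
    simp only [he]
    exact factor_t hβ L
  have hfacnn : ∀ t : Fin D, t ≠ z → (0:ℝ) ≤ ∑ x ∈ Finset.Icc (loA t) (hiA t),
      ∑ y ∈ Finset.Icc (1 : ℤ) (L : ℤ), fct z q β t x y := by
    intro t ht
    apply Finset.sum_nonneg; intro x _
    apply Finset.sum_nonneg; intro y _
    have he : fct z q β t x y = ((1 + |x - y| : ℤ) : ℝ) ^ (-β) := by simp [fct, ht]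
    rw [he]
    have h : (0 : ℝ) ≤ ((1 + |x - y| : ℤ) : ℝ) := by
      exact_mod_cast (by positivity : (0:ℤ) ≤ 1 + |x - y|)
    exact Real.rpow_nonneg h _
  -- combine
  have hcard : (Finset.univ.erase z).card = D - 1 := by
    rw [Finset.card_erase_of_mem (Finset.mem_univ z), Finset.card_univ, Fintype.card_fin]
  calc ∑ i ∈ Finset.Icc loA hiA,
      ∑ j ∈ Finset.Icc (fun _ : Fin D => (1 : ℤ)) (fun _ : Fin D => (L : ℤ)),
        (manhattan i j : ℝ) ^ (-(2 * α))
      ≤ ∏ t, ∑ x ∈ Finset.Icc (loA t) (hiA t), ∑ y ∈ Finset.Icc (1 : ℤ) (L : ℤ),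
          fct z q β t x y := by rw [← step2]; exact step1
    _ = (∑ x ∈ Finset.Icc (loA z) (hiA z), ∑ y ∈ Finset.Icc (1 : ℤ) (L : ℤ),
          fct z q β z x y)
        * ∏ t ∈ Finset.univ.erase z, ∑ x ∈ Finset.Icc (loA t) (hiA t),
            ∑ y ∈ Finset.Icc (1 : ℤ) (L : ℤ), fct z q β t x y :=
        (Finset.mul_prod_erase Finset.univ _ (Finset.mem_univ z)).symm
    _ ≤ (Kc q + 1) ^ 2 * ((2 * Kc β + 1) * L) ^ (D - 1) := by
        apply mul_le_mul hfac0
        · calc ∏ t ∈ Finset.univ.erase z, ∑ x ∈ Finset.Icc (loA t) (hiA t),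
                ∑ y ∈ Finset.Icc (1 : ℤ) (L : ℤ), fct z q β t x y
              ≤ ∏ _t ∈ Finset.univ.erase z, (2 * Kc β + 1) * (L : ℝ) := by
                apply Finset.prod_le_prod
                · intro t ht; exact hfacnn t (Finset.mem_erase.1 ht).1
                · intro t ht; exact hfacT t (Finset.mem_erase.1 ht).1
            _ = ((2 * Kc β + 1) * L) ^ (D - 1) := by rw [Finset.prod_const, hcard]
        · apply Finset.prod_nonneg
          intro t ht; exact hfacnn t (Finset.mem_erase.1 ht).1
        · positivity
    _ = (Kc q + 1) ^ 2 * (2 * Kc β + 1) ^ (D - 1) * (L : ℝ) ^ (D - 1 : ℕ) := by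
        rw [mul_pow]; ring
end

section
/- Fix a bipartition A ∪ B = Λ of a finite lattice with metric d, and an exponent α > 0. Suppose a density matrix ρ on ⊗_{i∈Λ} ℂ^{d₀} satisfies the clustering bound |Cor_ρ(O_X, O_Y)| ≤ C d(X,Y)^{−α} ‖O_X‖‖O_Y‖ for all operators O_X, O_Y supported on disjoint X ⊆ A, Y ⊆ B. If H_∂ = ∑_{i∈A, j∈B} h_{i,j} with each h_{i,j} = ∑_{s=1}^{d₀⁴} h_i^{(s)} ⊗ h_j^{(s)} a two-site interaction satisfying max_s ‖h_i^{(s)}‖·‖h_j^{(s)}‖ ≤ g/d(i,j)^α, then tr[(ρ^A ⊗ ρ^B − ρ) H_∂] ≤ C g d₀⁴ ∑_{i∈A, j∈B} d(i,j)^{−2α}. -/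
open scoped Matrix.Norms.L2Operator ComplexOrder Kronecker

section Setup

variable {A B : Type*} [Fintype A] [Fintype B] [DecidableEq A] [DecidableEq B]
  {d₀ : ℕ}

/-- The configuration at site `i ∈ A ⊕ B` of a basis label of `⊗_{i} ℂ^{d₀}`. -/
def coordAt (p : (A → Fin d₀) × (B → Fin d₀)) : A ⊕ B → Fin d₀ :=
  Sum.elim p.1 p.2

/-- An operator on `⊗_{i∈Λ} ℂ^{d₀}` (with `Λ = A ⊕ B`) is supported on
`X ⊆ Λ` if its matrix elements depend only on the configurations inside `X`
and vanish unless the configurations agree outside `X`. -/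
def SupportedOn (X : Finset (A ⊕ B))
    (O : Matrix ((A → Fin d₀) × (B → Fin d₀)) ((A → Fin d₀) × (B → Fin d₀)) ℂ) :
    Prop :=
  (∀ p q p' q', (∀ i ∈ X, coordAt p i = coordAt p' i) →
      (∀ i ∈ X, coordAt q i = coordAt q' i) →
      (∀ i ∉ X, coordAt p i = coordAt q i) →
      (∀ i ∉ X, coordAt p' i = coordAt q' i) → O p q = O p' q') ∧
  (∀ p q, (∃ i ∉ X, coordAt p i ≠ coordAt q i) → O p q = 0)

/-- Distance between two subsets of the lattice. -/
noncomputable def setDist [MetricSpace (A ⊕ B)] (X Y : Finset (A ⊕ B)) : ℝ :=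
  sInf (Set.image2 dist (X : Set (A ⊕ B)) (Y : Set (A ⊕ B)))

/-- Correlation function `Cor_ρ(O,O') = tr(ρOO') − tr(ρO)·tr(ρO')`. -/
noncomputable def Cor {m : Type*} [Fintype m]
    (ρ O O' : Matrix m m ℂ) : ℂ :=
  (ρ * O * O').trace - (ρ * O).trace * (ρ * O').trace

/-- Marginal on the `A` factor. -/
noncomputable def margA
    (ρ : Matrix ((A → Fin d₀) × (B → Fin d₀)) ((A → Fin d₀) × (B → Fin d₀)) ℂ) :
    Matrix (A → Fin d₀) (A → Fin d₀) ℂ :=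
  Matrix.of fun a a' => ∑ b : B → Fin d₀, ρ (a, b) (a', b)

/-- Marginal on the `B` factor. -/
noncomputable def margB
    (ρ : Matrix ((A → Fin d₀) × (B → Fin d₀)) ((A → Fin d₀) × (B → Fin d₀)) ℂ) :
    Matrix (B → Fin d₀) (B → Fin d₀) ℂ :=
  Matrix.of fun b b' => ∑ a : A → Fin d₀, ρ (a, b) (a, b')

end Setup

/-! Every boundary term `h_i^{(s)} ⊗ h_j^{(s)}` factors as `(u ⊗ 1)(1 ⊗ v)`, and the product of
marginals evaluates it to `tr(ρ u) tr(ρ v)`, so its contribution to `tr[(ρ^A ⊗ ρ^B − ρ) H_∂]` is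
exactly `−Cor_ρ(u, v)`. Clustering bounds this by `C d(i,j)^{-α} ‖u‖‖v‖`, the interaction decay
supplies another factor `g d(i,j)^{-α}`, and there are `d₀⁴` terms per pair `(i, j)`. -/

open Matrix

theorem setDist_singleton {A B : Type*} [MetricSpace (A ⊕ B)] (x y : A ⊕ B) :
    setDist {x} {y} = dist x y := by
  simp [setDist]

theorem rpow_neg_mul_div_rpow {x : ℝ} (hx : 0 < x) (α g : ℝ) :
    x ^ (-α) * (g / x ^ α) = g * x ^ (-(2 * α)) := by
  rw [div_eq_mul_inv, ← Real.rpow_neg hx.le, mul_left_comm, ← Real.rpow_add hx]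
  ring_nf

section Bipartite

variable {A B : Type*} [Fintype A] [Fintype B] [DecidableEq A] [DecidableEq B] {d₀ : ℕ}

theorem SupportedOn.exists_eq_kronecker_one [Nonempty (B → Fin d₀)] {X : Finset A}
    {O : Matrix ((A → Fin d₀) × (B → Fin d₀)) ((A → Fin d₀) × (B → Fin d₀)) ℂ}
    (hO : SupportedOn (X.image Sum.inl) O) :
    ∃ M : Matrix (A → Fin d₀) (A → Fin d₀) ℂ, O = M ⊗ₖ (1 : Matrix (B → Fin d₀) _ ℂ) := by
  obtain ⟨b₀⟩ := ‹Nonempty (B → Fin d₀)›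
  refine ⟨Matrix.of fun a a' => O (a, b₀) (a', b₀), ?_⟩
  ext ⟨a, b⟩ ⟨a', b'⟩
  simp only [kroneckerMap_apply, of_apply, one_apply, mul_ite, mul_one, mul_zero]
  split_ifs with hb
  · subst hb
    by_cases ha : ∀ k ∉ X, a k = a' k
    · apply hO.1 <;> rintro (k | k) hk <;> simp_all [coordAt]
    · push Not at ha
      obtain ⟨k, hk, hak⟩ := ha
      have hk' : Sum.inl k ∉ X.image (Sum.inl : A → A ⊕ B) := by simpa using hk
      rw [hO.2 (a, b) (a', b) ⟨_, hk', hak⟩, hO.2 (a, b₀) (a', b₀) ⟨_, hk', hak⟩]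
  · obtain ⟨j, hj⟩ := Function.ne_iff.mp hb
    exact hO.2 _ _ ⟨Sum.inr j, by simp, hj⟩

theorem SupportedOn.exists_eq_one_kronecker [Nonempty (A → Fin d₀)] {Y : Finset B}
    {O : Matrix ((A → Fin d₀) × (B → Fin d₀)) ((A → Fin d₀) × (B → Fin d₀)) ℂ}
    (hO : SupportedOn (Y.image Sum.inr) O) :
    ∃ N : Matrix (B → Fin d₀) (B → Fin d₀) ℂ, O = (1 : Matrix (A → Fin d₀) _ ℂ) ⊗ₖ N := by
  obtain ⟨a₀⟩ := ‹Nonempty (A → Fin d₀)›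
  refine ⟨Matrix.of fun b b' => O (a₀, b) (a₀, b'), ?_⟩
  ext ⟨a, b⟩ ⟨a', b'⟩
  simp only [kroneckerMap_apply, of_apply, one_apply, ite_mul, one_mul, zero_mul]
  split_ifs with ha
  · subst ha
    by_cases hb : ∀ k ∉ Y, b k = b' k
    · apply hO.1 <;> rintro (k | k) hk <;> simp_all [coordAt]
    · push Not at hb
      obtain ⟨k, hk, hbk⟩ := hb
      have hk' : Sum.inr k ∉ Y.image (Sum.inr : B → A ⊕ B) := by simpa using hk
      rw [hO.2 (a, b) (a, b') ⟨_, hk', hbk⟩, hO.2 (a₀, b) (a₀, b') ⟨_, hk', hbk⟩]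
  · obtain ⟨i, hi⟩ := Function.ne_iff.mp ha
    exact hO.2 _ _ ⟨Sum.inl i, by simp, hi⟩

variable (ρ : Matrix ((A → Fin d₀) × (B → Fin d₀)) ((A → Fin d₀) × (B → Fin d₀)) ℂ)

theorem trace_mul_kronecker_one (M : Matrix (A → Fin d₀) (A → Fin d₀) ℂ) :
    (ρ * (M ⊗ₖ (1 : Matrix (B → Fin d₀) _ ℂ))).trace = (margA ρ * M).trace := by
  simp only [trace, diag, mul_apply, margA, of_apply, kroneckerMap_apply, one_apply, mul_ite,
    mul_one, mul_zero, Finset.sum_mul, Fintype.sum_prod_type, Finset.sum_ite_eq',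
    Finset.mem_univ, if_true]
  exact Finset.sum_congr rfl fun _ _ => Finset.sum_comm

theorem trace_mul_one_kronecker (N : Matrix (B → Fin d₀) (B → Fin d₀) ℂ) :
    (ρ * ((1 : Matrix (A → Fin d₀) _ ℂ) ⊗ₖ N)).trace = (margB ρ * N).trace := by
  simp only [trace, diag, mul_apply, margB, of_apply, kroneckerMap_apply, one_apply, ite_mul,
    one_mul, zero_mul, Finset.sum_mul, Fintype.sum_prod_type]
  rw [Finset.sum_comm]
  refine Finset.sum_congr rfl fun b _ => ?_
  conv_lhs => enter [2, a]; rw [Finset.sum_comm]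
  simp only [mul_ite, mul_zero, Finset.sum_ite_eq', Finset.mem_univ, if_true]
  exact Finset.sum_comm

theorem trace_marginals_sub_mul_kronecker (M : Matrix (A → Fin d₀) (A → Fin d₀) ℂ)
    (N : Matrix (B → Fin d₀) (B → Fin d₀) ℂ) :
    ((margA ρ ⊗ₖ margB ρ - ρ) * ((M ⊗ₖ 1) * (1 ⊗ₖ N))).trace
      = -Cor ρ (M ⊗ₖ 1) (1 ⊗ₖ N) := by
  have hprod : ((margA ρ ⊗ₖ margB ρ) * ((M ⊗ₖ 1) * (1 ⊗ₖ N))).trace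
      = (ρ * (M ⊗ₖ 1)).trace * (ρ * (1 ⊗ₖ N)).trace := by
    rw [← mul_kronecker_mul, Matrix.mul_one, Matrix.one_mul, ← mul_kronecker_mul,
      trace_kronecker, trace_mul_kronecker_one, trace_mul_one_kronecker]
  rw [Matrix.sub_mul, trace_sub, hprod, Cor, Matrix.mul_assoc]
  ring

theorem SupportedOn.trace_marginals_sub_mul [Nonempty (Fin d₀)] {X : Finset A} {Y : Finset B}
    {u v : Matrix ((A → Fin d₀) × (B → Fin d₀)) ((A → Fin d₀) × (B → Fin d₀)) ℂ}
    (hu : SupportedOn (X.image Sum.inl) u) (hv : SupportedOn (Y.image Sum.inr) v) :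
    ((margA ρ ⊗ₖ margB ρ - ρ) * (u * v)).trace = -Cor ρ u v := by
  obtain ⟨M, rfl⟩ := hu.exists_eq_kronecker_one
  obtain ⟨N, rfl⟩ := hv.exists_eq_one_kronecker
  exact trace_marginals_sub_mul_kronecker ρ M N

theorem re_trace_marginals_sub_mul_le [MetricSpace (A ⊕ B)] [Nonempty (Fin d₀)] {α C g : ℝ}
    (hC : 0 ≤ C) {i : A} {j : B}
    {u v : Matrix ((A → Fin d₀) × (B → Fin d₀)) ((A → Fin d₀) × (B → Fin d₀)) ℂ}
    (hu : SupportedOn {Sum.inl i} u) (hv : SupportedOn {Sum.inr j} v)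
    (hclust : ‖Cor ρ u v‖ ≤ C * dist (Sum.inl i : A ⊕ B) (Sum.inr j) ^ (-α) * ‖u‖ * ‖v‖)
    (hnorm : ‖u‖ * ‖v‖ ≤ g / dist (Sum.inl i : A ⊕ B) (Sum.inr j) ^ α) :
    (((margA ρ ⊗ₖ margB ρ - ρ) * (u * v)).trace).re
      ≤ C * g * dist (Sum.inl i : A ⊕ B) (Sum.inr j) ^ (-(2 * α)) := by
  set d := dist (Sum.inl i : A ⊕ B) (Sum.inr j)
  have hd : 0 < d := dist_pos.mpr Sum.inl_ne_inr
  have hu' : SupportedOn (({i} : Finset A).image Sum.inl) u := by simpa using hu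
  have hv' : SupportedOn (({j} : Finset B).image Sum.inr) v := by simpa using hv
  rw [hu'.trace_marginals_sub_mul ρ hv']
  calc (-Cor ρ u v).re
      ≤ ‖Cor ρ u v‖ := (Complex.re_le_norm _).trans_eq (norm_neg _)
    _ ≤ C * d ^ (-α) * (‖u‖ * ‖v‖) := by rwa [← mul_assoc]
    _ ≤ C * d ^ (-α) * (g / d ^ α) := by gcongr
    _ = C * g * d ^ (-(2 * α)) := by rw [mul_assoc, rpow_neg_mul_div_rpow hd, mul_assoc]

end Bipartite

theorem stmt_15_general {A B : Type*} [Fintype A] [Fintype B] [DecidableEq A] [DecidableEq B]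
    [MetricSpace (A ⊕ B)] (d₀ : ℕ) (hd₀ : 1 ≤ d₀)
    (α C g : ℝ) (hC : 0 < C)
    (ρ : Matrix ((A → Fin d₀) × (B → Fin d₀)) ((A → Fin d₀) × (B → Fin d₀)) ℂ)
    (hclust : ∀ (X : Finset A) (Y : Finset B)
      (OX OY : Matrix ((A → Fin d₀) × (B → Fin d₀)) ((A → Fin d₀) × (B → Fin d₀)) ℂ),
      SupportedOn (X.image Sum.inl) OX → SupportedOn (Y.image Sum.inr) OY →
      ‖Cor ρ OX OY‖ ≤ C * setDist (X.image Sum.inl) (Y.image Sum.inr) ^ (-α)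
        * ‖OX‖ * ‖OY‖)
    (uop vop : A → B → Fin (d₀ ^ 4) →
      Matrix ((A → Fin d₀) × (B → Fin d₀)) ((A → Fin d₀) × (B → Fin d₀)) ℂ)
    (hu : ∀ i j s, SupportedOn {Sum.inl i} (uop i j s))
    (hv : ∀ i j s, SupportedOn {Sum.inr j} (vop i j s))
    (hnorm : ∀ (i : A) (j : B) (s : Fin (d₀ ^ 4)),
      ‖uop i j s‖ * ‖vop i j s‖ ≤ g / dist (Sum.inl i : A ⊕ B) (Sum.inr j) ^ α)
    (Hbd : Matrix ((A → Fin d₀) × (B → Fin d₀)) ((A → Fin d₀) × (B → Fin d₀)) ℂ)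
    (hHbd : Hbd = ∑ i : A, ∑ j : B, ∑ s : Fin (d₀ ^ 4), uop i j s * vop i j s) :
    (((margA ρ ⊗ₖ margB ρ - ρ) * Hbd).trace).re
      ≤ C * g * (d₀ ^ 4 : ℕ) * ∑ i : A, ∑ j : B,
          dist (Sum.inl i : A ⊕ B) (Sum.inr j) ^ (-(2 * α)) := by
  have : Nonempty (Fin d₀) := ⟨⟨0, hd₀⟩⟩
  have hclust_sites : ∀ i j s, ‖Cor ρ (uop i j s) (vop i j s)‖
      ≤ C * dist (Sum.inl i : A ⊕ B) (Sum.inr j) ^ (-α) * ‖uop i j s‖ * ‖vop i j s‖ :=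
    fun i j s => by
      simpa [setDist_singleton] using
        hclust {i} {j} _ _ (by simpa using hu i j s) (by simpa using hv i j s)
  calc (((margA ρ ⊗ₖ margB ρ - ρ) * Hbd).trace).re
      = ∑ i, ∑ j, ∑ s : Fin (d₀ ^ 4),
          (((margA ρ ⊗ₖ margB ρ - ρ) * (uop i j s * vop i j s)).trace).re := by
        simp only [hHbd, Matrix.mul_sum, trace_sum, Complex.re_sum]
    _ ≤ ∑ i, ∑ j, ∑ _s : Fin (d₀ ^ 4),
          C * g * dist (Sum.inl i : A ⊕ B) (Sum.inr j) ^ (-(2 * α)) := by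
        gcongr with i _ j _ s _
        exact re_trace_marginals_sub_mul_le ρ hC.le (hu i j s) (hv i j s)
          (hclust_sites i j s) (hnorm i j s)
    _ = C * g * (d₀ ^ 4 : ℕ) * ∑ i : A, ∑ j : B,
          dist (Sum.inl i : A ⊕ B) (Sum.inr j) ^ (-(2 * α)) := by
        simp only [Finset.sum_const, Finset.card_univ, Fintype.card_fin, nsmul_eq_mul,
          Finset.mul_sum]
        ring_nf

/-- Central intermediate inequality of Theorem 1: power-law clustering plus
power-law decaying two-site boundary interactions
`h_{i,j} = ∑_{s} h_i^{(s)} ⊗ h_j^{(s)}` with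
`max_s ‖h_i^{(s)}‖·‖h_j^{(s)}‖ ≤ g/d(i,j)^α` imply
`tr[(ρ^A ⊗ ρ^B − ρ) H_∂] ≤ C g d₀⁴ ∑_{i∈A,j∈B} d(i,j)^{-2α}`. -/
theorem stmt_15 {A B : Type*} [Fintype A] [Fintype B] [DecidableEq A] [DecidableEq B]
    [MetricSpace (A ⊕ B)] (d₀ : ℕ) (hd₀ : 1 ≤ d₀)
    (α C g : ℝ) (hα : 0 < α) (hC : 0 < C) (hg : 0 < g)
    (ρ : Matrix ((A → Fin d₀) × (B → Fin d₀)) ((A → Fin d₀) × (B → Fin d₀)) ℂ)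
    (hρ : ρ.PosSemidef ∧ ρ.trace = 1)
    (hclust : ∀ (X : Finset A) (Y : Finset B)
      (OX OY : Matrix ((A → Fin d₀) × (B → Fin d₀)) ((A → Fin d₀) × (B → Fin d₀)) ℂ),
      SupportedOn (X.image Sum.inl) OX → SupportedOn (Y.image Sum.inr) OY →
      ‖Cor ρ OX OY‖ ≤ C * setDist (X.image Sum.inl) (Y.image Sum.inr) ^ (-α)
        * ‖OX‖ * ‖OY‖)
    (uop vop : A → B → Fin (d₀ ^ 4) →
      Matrix ((A → Fin d₀) × (B → Fin d₀)) ((A → Fin d₀) × (B → Fin d₀)) ℂ)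
    (hu : ∀ i j s, SupportedOn {Sum.inl i} (uop i j s))
    (hv : ∀ i j s, SupportedOn {Sum.inr j} (vop i j s))
    (hnorm : ∀ (i : A) (j : B) (s : Fin (d₀ ^ 4)),
      ‖uop i j s‖ * ‖vop i j s‖ ≤ g / dist (Sum.inl i : A ⊕ B) (Sum.inr j) ^ α)
    (Hbd : Matrix ((A → Fin d₀) × (B → Fin d₀)) ((A → Fin d₀) × (B → Fin d₀)) ℂ)
    (hHbd : Hbd = ∑ i : A, ∑ j : B, ∑ s : Fin (d₀ ^ 4), uop i j s * vop i j s) :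
    (((margA ρ ⊗ₖ margB ρ - ρ) * Hbd).trace).re
      ≤ C * g * (d₀ ^ 4 : ℕ) * ∑ i : A, ∑ j : B,
          dist (Sum.inl i : A ⊕ B) (Sum.inr j) ^ (-(2 * α)) :=
  stmt_15_general d₀ hd₀ α C g hC ρ hclust uop vop hu hv hnorm Hbd hHbd
end
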